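/- arXiv:2107.08566 — 7 statements merged into one kernel-verified Lean document; each statement's English description precedes it below -/
import Mathlib

section
/- Let X, Y ⊆ ℝ^n be closed convex sets with Y bounded and nonempty. Then a point x ∈ ℝ^n belongs to X if and only if x + Y ⊆ X + Y (Minkowski sum). -/
open Pointwise

/-- Order cancellation lemma: for closed convex `X`, `Y ⊆ ℝⁿ` with `Y`
bounded and nonempty, `x ∈ X ↔ x + Y ⊆ X + Y`. -/
theorem stmt1 {n : ℕ} (X Y : Set (EuclideanSpace ℝ (Fin n)))
    (hXcl : IsClosed X) (hXcv : Convex ℝ X)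
    (hYcl : IsClosed Y) (hYcv : Convex ℝ Y)
    (hYb : Bornology.IsBounded Y) (hYne : Y.Nonempty)
    (x : EuclideanSpace ℝ (Fin n)) :
    x ∈ X ↔ {x} + Y ⊆ X + Y := by
  constructor
  · intro hx z hz
    obtain ⟨a, ha, b, hb, rfl⟩ := hz
    exact Set.add_mem_add (Set.mem_singleton_iff.mp ha ▸ hx) hb
  · intro h
    by_contra hx
    obtain ⟨f, u, hfu, hux⟩ := geometric_hahn_banach_closed_point hXcv hXcl hx
    -- Y is compact
    have hYcp : IsCompact Y := Metric.isCompact_of_isClosed_isBounded hYcl hYb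
    obtain ⟨y, hy, hmax⟩ := hYcp.exists_isMaxOn hYne f.continuous.continuousOn
    have hmem : x + y ∈ X + Y := h (Set.add_mem_add rfl hy)
    obtain ⟨a, ha, b, hb, hab⟩ := hmem
    have h1 : f (x + y) = f (a + b) := by
      simp only [← hab]
    have h2 : f a < u := hfu a ha
    have h3 : f b ≤ f y := hmax hb
    rw [map_add, map_add] at h1; linarith
end

section
/- The convex hull of a robust controlled invariant set is robustly controlled invariant, provided the safe set S_xu is convex. -/
/-- `C` is a robust controlled invariant set of `x⁺ = Ax + Bu + Ew` within `Sxu`. -/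
def IsRCIS {n m d : ℕ} (A : Matrix (Fin n) (Fin n) ℝ) (B : Matrix (Fin n) (Fin m) ℝ)
    (E : Matrix (Fin n) (Fin d) ℝ) (W : Set (Fin d → ℝ))
    (Sxu : Set ((Fin n → ℝ) × (Fin m → ℝ))) (C : Set (Fin n → ℝ)) : Prop :=
  ∀ x ∈ C, ∃ u : Fin m → ℝ, (x, u) ∈ Sxu ∧
    ∀ w ∈ W, A.mulVec x + B.mulVec u + E.mulVec w ∈ C

/-- If the safe set is convex, the convex hull of an RCIS is an RCIS. -/
theorem stmt3 {n m d : ℕ} (A : Matrix (Fin n) (Fin n) ℝ) (B : Matrix (Fin n) (Fin m) ℝ)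
    (E : Matrix (Fin n) (Fin d) ℝ) (W : Set (Fin d → ℝ))
    (Sxu : Set ((Fin n → ℝ) × (Fin m → ℝ))) (hS : Convex ℝ Sxu)
    (C : Set (Fin n → ℝ)) (hC : IsRCIS A B E W Sxu C) :
    IsRCIS A B E W Sxu (convexHull ℝ C) := by
  set S : Set (Fin n → ℝ) := {x | ∃ u : Fin m → ℝ, (x, u) ∈ Sxu ∧
    ∀ w ∈ W, A.mulVec x + B.mulVec u + E.mulVec w ∈ convexHull ℝ C} with hSdef
  have hCS : C ⊆ S := by
    intro x hx
    obtain ⟨u, hu, hinv⟩ := hC x hx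
    exact ⟨u, hu, fun w hw => subset_convexHull ℝ C (hinv w hw)⟩
  have hconv : Convex ℝ S := by
    intro x hx y hy a b ha hb hab
    obtain ⟨ux, hux, hix⟩ := hx
    obtain ⟨uy, huy, hiy⟩ := hy
    refine ⟨a • ux + b • uy, ?_, ?_⟩
    · have := hS hux huy ha hb hab
      simpa [Prod.smul_mk, Prod.mk_add_mk] using this
    · intro w hw
      have hCC : Convex ℝ (convexHull ℝ C) := convex_convexHull ℝ C
      have hcomb := hCC (hix w hw) (hiy w hw) ha hb hab
      have heq : a • (A.mulVec x + B.mulVec ux + E.mulVec w)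
          + b • (A.mulVec y + B.mulVec uy + E.mulVec w)
          = A.mulVec (a • x + b • y) + B.mulVec (a • ux + b • uy) + E.mulVec w := by
        simp only [Matrix.mulVec_add, Matrix.mulVec_smul]
        match_scalars <;> linarith
      rwa [heq] at hcomb
  intro x hx
  exact convexHull_min hCS hconv hx
end

section
/- Let C_xv ⊆ ℝ^n × ℝ^q be a robust positively invariant set of the companion system (x,v) ↦ (Ax + BHv + Ew, Pv) within the companion safe set S_xv = {(x,v) | (x, Hv) ∈ S_xu}. Then the projection of C_xv onto the first n coordinates is a robust controlled invariant set of x⁺ = Ax + Bu + Ew within S_xu. -/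
/-- If `Cxv` is a robust positively invariant set of the companion system
`(x,v) ↦ (Ax + BHv + Ew, Pv)` within the companion safe set
`Sxv = {(x,v) | (x,Hv) ∈ Sxu}`, then `π₁(Cxv)` is an RCIS of `Σ` within `Sxu`. -/
theorem stmt4 {n m d q : ℕ} (A : Matrix (Fin n) (Fin n) ℝ) (B : Matrix (Fin n) (Fin m) ℝ)
    (E : Matrix (Fin n) (Fin d) ℝ) (H : Matrix (Fin m) (Fin q) ℝ)
    (P : Matrix (Fin q) (Fin q) ℝ) (W : Set (Fin d → ℝ))
    (Sxu : Set ((Fin n → ℝ) × (Fin m → ℝ)))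
    (Cxv : Set ((Fin n → ℝ) × (Fin q → ℝ)))
    (hsub : Cxv ⊆ {p | (p.1, H.mulVec p.2) ∈ Sxu})
    (hinv : ∀ p ∈ Cxv, ∀ w ∈ W,
      (A.mulVec p.1 + B.mulVec (H.mulVec p.2) + E.mulVec w, P.mulVec p.2) ∈ Cxv) :
    IsRCIS A B E W Sxu (Prod.fst '' Cxv) := by
  rintro x ⟨⟨x', v⟩, hp, rfl⟩
  exact ⟨H.mulVec v, hsub hp, fun w hw => ⟨_, hinv _ hp w hw, rfl⟩⟩
end

section
/- Under nilpotent A (A^ν = 0) and eventually periodic inputs u_{t+λ} = u_t for t ≥ τ, the infinite family of reachability constraints (R(x, {u_i}_{i=0}^{t-1}), u_t) ⊆ S_xu for all t ≥ 0 holds if and only if it holds for t = 0, 1, ..., ν + τ + λ - 1. -/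
open Pointwise

/-- Accumulated disturbance set `W̄_t = Σ_{i=1}^t A^{i-1} E W` (Minkowski sum). -/
noncomputable def Wbar {n d : ℕ} (A : Matrix (Fin n) (Fin n) ℝ) (E : Matrix (Fin n) (Fin d) ℝ)
    (W : Set (Fin d → ℝ)) (t : ℕ) : Set (Fin n → ℝ) :=
  ∑ i ∈ Finset.range t, (fun w => (A ^ i * E).mulVec w) '' W

/-- Reachable set `R(x, {u_i}_{i=0}^{t-1}) = A^t x + Σ_{i=1}^t A^{i-1} B u_{t-i} + W̄_t`. -/
noncomputable def Reach {n m d : ℕ} (A : Matrix (Fin n) (Fin n) ℝ) (B : Matrix (Fin n) (Fin m) ℝ)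
    (E : Matrix (Fin n) (Fin d) ℝ) (W : Set (Fin d → ℝ))
    (x : Fin n → ℝ) (u : ℕ → Fin m → ℝ) (t : ℕ) : Set (Fin n → ℝ) :=
  {(A ^ t).mulVec x + ∑ i ∈ Finset.range t, (A ^ i * B).mulVec (u (t - 1 - i))} + Wbar A E W t

lemma Apow_zero {n : ℕ} {A : Matrix (Fin n) (Fin n) ℝ} {ν : ℕ} (hν : A ^ ν = 0)
    {i : ℕ} (hi : ν ≤ i) : A ^ i = 0 := by
  obtain ⟨k, rfl⟩ := Nat.exists_eq_add_of_le hi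
  rw [pow_add, hν, zero_mul]

lemma sum_trunc {n m : ℕ} {A : Matrix (Fin n) (Fin n) ℝ} (B : Matrix (Fin n) (Fin m) ℝ)
    {ν : ℕ} (hν : A ^ ν = 0) (T : ℕ) (hT : ν ≤ T) (v : ℕ → Fin m → ℝ) :
    ∑ i ∈ Finset.range T, (A ^ i * B).mulVec (v i)
      = ∑ i ∈ Finset.range ν, (A ^ i * B).mulVec (v i) := by
  refine (Finset.sum_subset (Finset.range_subset_range.mpr hT) ?_).symm
  intro i _ hi
  rw [Apow_zero hν (by simpa using hi), Matrix.zero_mul, Matrix.zero_mulVec]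

lemma Wbar_trunc {n d : ℕ} {A : Matrix (Fin n) (Fin n) ℝ} (E : Matrix (Fin n) (Fin d) ℝ)
    {W : Set (Fin d → ℝ)} (hW : W.Nonempty) {ν : ℕ} (hν : A ^ ν = 0)
    (T : ℕ) (hT : ν ≤ T) : Wbar A E W T = Wbar A E W ν := by
  unfold Wbar
  refine (Finset.sum_subset (Finset.range_subset_range.mpr hT) ?_).symm
  intro i _ hi
  rw [Apow_zero hν (by simpa using hi), Matrix.zero_mul]
  have : (fun w : Fin d → ℝ => (0 : Matrix (Fin n) (Fin d) ℝ).mulVec w) '' W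
      = (fun _ : Fin d → ℝ => (0 : Fin n → ℝ)) '' W := by
    apply Set.image_congr
    intro a _
    exact Matrix.zero_mulVec a
  rw [this, Set.Nonempty.image_const hW]
  rfl

lemma Wbar_empty {n d : ℕ} (A : Matrix (Fin n) (Fin n) ℝ) (E : Matrix (Fin n) (Fin d) ℝ)
    {T : ℕ} (hT : 1 ≤ T) : Wbar A E (∅ : Set (Fin d → ℝ)) T = ∅ := by
  obtain ⟨S, rfl⟩ := Nat.exists_eq_add_of_le hT
  unfold Wbar
  rw [add_comm 1 S, Finset.sum_range_succ, Set.image_empty, Set.add_empty]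

lemma Reach_shift {n m d : ℕ} (A : Matrix (Fin n) (Fin n) ℝ) (B : Matrix (Fin n) (Fin m) ℝ)
    (E : Matrix (Fin n) (Fin d) ℝ) (W : Set (Fin d → ℝ))
    {ν τ lam : ℕ} (hν : A ^ ν = 0) (hlam : 1 ≤ lam)
    (u : ℕ → Fin m → ℝ) (hu : ∀ t, τ ≤ t → u (t + lam) = u t)
    (x : Fin n → ℝ) {t : ℕ} (ht : ν + τ ≤ t) :
    Reach A B E W x u (t + lam) ⊆ Reach A B E W x u t := by
  rcases W.eq_empty_or_nonempty with hW | hW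
  · subst hW
    rw [Reach, Wbar_empty A E (by omega), Set.add_empty]
    exact Set.empty_subset _
  · have hsum : ∑ i ∈ Finset.range (t + lam), (A ^ i * B).mulVec (u (t + lam - 1 - i))
        = ∑ i ∈ Finset.range t, (A ^ i * B).mulVec (u (t - 1 - i)) := by
      rw [sum_trunc B hν (t + lam) (by omega), sum_trunc B hν t (by omega)]
      apply Finset.sum_congr rfl
      intro i hi
      have hi' : i < ν := Finset.mem_range.mp hi
      have h1 : t + lam - 1 - i = (t - 1 - i) + lam := by omega
      have h2 : τ ≤ t - 1 - i := by omega
      rw [h1, hu _ h2]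
    have heq : Reach A B E W x u (t + lam) = Reach A B E W x u t := by
      rw [Reach, Reach, hsum,
        Wbar_trunc E hW hν (t + lam) (by omega), Wbar_trunc E hW hν t (by omega),
        Apow_zero hν (show ν ≤ t + lam by omega), Apow_zero hν (show ν ≤ t by omega)]
    rw [heq]

/-- Under nilpotent `A` and eventually periodic inputs, the infinite family
of reachability constraints holds iff it holds for `t = 0, …, ν + τ + λ - 1`. -/
theorem stmt6 {n m d : ℕ} (A : Matrix (Fin n) (Fin n) ℝ) (B : Matrix (Fin n) (Fin m) ℝ)
    (E : Matrix (Fin n) (Fin d) ℝ) (W : Set (Fin d → ℝ))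
    (Sxu : Set ((Fin n → ℝ) × (Fin m → ℝ)))
    (ν τ lam : ℕ) (hν : A ^ ν = 0) (hlam : 1 ≤ lam)
    (u : ℕ → Fin m → ℝ) (hu : ∀ t, τ ≤ t → u (t + lam) = u t)
    (x : Fin n → ℝ) :
    (∀ t, ∀ y ∈ Reach A B E W x u t, (y, u t) ∈ Sxu) ↔
      (∀ t < ν + τ + lam, ∀ y ∈ Reach A B E W x u t, (y, u t) ∈ Sxu) := by
  constructor
  · intro h t _
    exact h t
  · intro h t
    induction t using Nat.strong_induction_on with
    | _ t ih =>
      by_cases ht : t < ν + τ + lam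
      · exact h t ht
      · push_neg at ht
        have h1 : ν + τ ≤ t - lam := by omega
        have h2 : t - lam + lam = t := by omega
        have hut : u t = u (t - lam) := by
          conv_lhs => rw [← h2]
          exact hu _ (by omega)
        intro y hy
        have hy' : y ∈ Reach A B E W x u (t - lam) := by
          apply Reach_shift A B E W hν hlam u hu x h1
          rwa [h2]
        rw [hut]
        exact ih (t - lam) (by omega) y hy'
end

section
/- The set C_{outer,ν} = {x | ∃ inputs u_0,...,u_{ν-1} such that (R(x,{u_i}_{i=0}^{t-1}), u_t) ⊆ S_xu for t = 0,...,ν-1 and R(x,{u_i}_{i=0}^{ν-1}) ⊆ C̄_max + W̄_∞} is a robust controlled invariant set of x⁺ = Ax + Bu + Ew within S_xu. -/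
open Pointwise

/-- The nominal safe set `S̄xu = Sxu − (W̄_∞ × {0})` (Minkowski difference). -/
def Sbar {n m d : ℕ} (A : Matrix (Fin n) (Fin n) ℝ) (E : Matrix (Fin n) (Fin d) ℝ)
    (W : Set (Fin d → ℝ)) (ν : ℕ) (Sxu : Set ((Fin n → ℝ) × (Fin m → ℝ))) :
    Set ((Fin n → ℝ) × (Fin m → ℝ)) :=
  {p | ∀ q ∈ Wbar A E W ν, (p.1 + q, p.2) ∈ Sxu}

/-- `C` is a controlled invariant set of the nominal system `x⁺ = Ax + Bu` within `S̄xu`. -/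
def IsNomCIS {n m d : ℕ} (A : Matrix (Fin n) (Fin n) ℝ) (B : Matrix (Fin n) (Fin m) ℝ)
    (E : Matrix (Fin n) (Fin d) ℝ) (W : Set (Fin d → ℝ)) (ν : ℕ)
    (Sxu : Set ((Fin n → ℝ) × (Fin m → ℝ))) (C : Set (Fin n → ℝ)) : Prop :=
  ∀ x ∈ C, ∃ u : Fin m → ℝ, (x, u) ∈ Sbar A E W ν Sxu ∧ A.mulVec x + B.mulVec u ∈ C

/-- The outer bound `C_{outer,ν}`. -/
noncomputable def Couter {n m d : ℕ} (A : Matrix (Fin n) (Fin n) ℝ)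
    (B : Matrix (Fin n) (Fin m) ℝ) (E : Matrix (Fin n) (Fin d) ℝ) (W : Set (Fin d → ℝ))
    (ν : ℕ) (Sxu : Set ((Fin n → ℝ) × (Fin m → ℝ))) (Cmax : Set (Fin n → ℝ)) :
    Set (Fin n → ℝ) :=
  {x | ∃ u : ℕ → Fin m → ℝ,
    (∀ t < ν, ∀ y ∈ Reach A B E W x u t, (y, u t) ∈ Sxu) ∧
    Reach A B E W x u ν ⊆ Cmax + Wbar A E W ν}

open Filter Topology in
/-- Rådström-type cancellation: if `x + K ⊆ C + K` (elementwise) with `K` compact nonempty and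
`C` closed convex, then `x ∈ C`. -/
lemma radstrom_cancel {n : ℕ} {C K : Set (Fin n → ℝ)} (hCcl : IsClosed C) (hCcv : Convex ℝ C)
    (hK : IsCompact K) (k0 : Fin n → ℝ) (hk0 : k0 ∈ K) (x : Fin n → ℝ)
    (h : ∀ k ∈ K, ∃ p ∈ C, ∃ k' ∈ K, x + k = p + k') : x ∈ C := by
  choose p hp k' hk' heq using h
  let seq : ℕ → {v : Fin n → ℝ // v ∈ K} := fun N =>
    Nat.rec ⟨k0, hk0⟩ (fun _ q => ⟨k' q.1 q.2, hk' q.1 q.2⟩) N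
  have hseq : ∀ N, x + (seq N).1 = p (seq N).1 (seq N).2 + (seq (N + 1)).1 := fun N =>
    heq (seq N).1 (seq N).2
  have htel : ∀ N : ℕ, (N : ℝ) • x + k0
      = (∑ i ∈ Finset.range N, p (seq i).1 (seq i).2) + (seq N).1 := by
    intro N
    induction N with
    | zero => simp [seq]
    | succ N ih =>
      rw [Finset.sum_range_succ]
      push_cast
      calc ((N : ℝ) + 1) • x + k0 = ((N : ℝ) • x + k0) + x := by module
        _ = ((∑ i ∈ Finset.range N, p (seq i).1 (seq i).2) + (seq N).1) + x := by rw [ih]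
        _ = (∑ i ∈ Finset.range N, p (seq i).1 (seq i).2) + (x + (seq N).1) := by module
        _ = (∑ i ∈ Finset.range N, p (seq i).1 (seq i).2)
              + (p (seq N).1 (seq N).2 + (seq (N + 1)).1) := by rw [hseq N]
        _ = ((∑ i ∈ Finset.range N, p (seq i).1 (seq i).2) + p (seq N).1 (seq N).2)
              + (seq (N + 1)).1 := by module
  have hxmem : ∀ N : ℕ, 0 < N → x + (N : ℝ)⁻¹ • (k0 - (seq N).1) ∈ C := by
    intro N hN
    have hN' : (N : ℝ) ≠ 0 := Nat.cast_ne_zero.mpr hN.ne'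
    have hsum : (∑ i ∈ Finset.range N, p (seq i).1 (seq i).2)
        = (N : ℝ) • x + (k0 - (seq N).1) := by
      have h2 := eq_sub_of_add_eq (htel N).symm
      rw [h2, add_sub_assoc]
    have hrw : x + (N : ℝ)⁻¹ • (k0 - (seq N).1)
        = ∑ i ∈ Finset.range N, (N : ℝ)⁻¹ • p (seq i).1 (seq i).2 := by
      rw [← Finset.smul_sum, hsum, smul_add, smul_smul, inv_mul_cancel₀ hN', one_smul]
    rw [hrw]
    apply hCcv.sum_mem (fun i _ => by positivity)
    · rw [Finset.sum_const, Finset.card_range, nsmul_eq_mul, mul_inv_cancel₀ hN']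
    · exact fun i _ => hp _ _
  obtain ⟨M, hM⟩ := hK.isBounded.exists_norm_le
  have h0 : Tendsto (fun N : ℕ => (N : ℝ)⁻¹ • (k0 - (seq N).1)) atTop (𝓝 0) := by
    refine squeeze_zero_norm (fun N => ?_) (tendsto_const_div_atTop_nhds_zero_nat (‖k0‖ + M))
    rw [norm_smul, norm_inv, Real.norm_natCast, div_eq_inv_mul]
    have h1 : ‖k0 - (seq N).1‖ ≤ ‖k0‖ + M :=
      (norm_sub_le _ _).trans (by have := hM _ (seq N).2; linarith)
    exact mul_le_mul_of_nonneg_left h1 (by positivity)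
  have hten : Tendsto (fun N : ℕ => x + (N : ℝ)⁻¹ • (k0 - (seq N).1)) atTop (𝓝 x) := by
    simpa using tendsto_const_nhds.add h0
  exact hCcl.mem_of_tendsto hten (Filter.eventually_atTop.mpr ⟨1, fun N hN => hxmem N hN⟩)

lemma wbar_props {n d : ℕ} (A : Matrix (Fin n) (Fin n) ℝ) (E : Matrix (Fin n) (Fin d) ℝ)
    {W : Set (Fin d → ℝ)} (hWcpt : IsCompact W) (hWcvx : Convex ℝ W) (hWne : W.Nonempty)
    (t : ℕ) : IsCompact (Wbar A E W t) ∧ Convex ℝ (Wbar A E W t) ∧ (Wbar A E W t).Nonempty := by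
  induction t with
  | zero =>
    simp only [Wbar, Finset.range_zero, Finset.sum_empty, ← Set.singleton_zero]
    exact ⟨isCompact_singleton, convex_singleton _, Set.singleton_nonempty _⟩
  | succ t ih =>
    obtain ⟨hc, hv, hne⟩ := ih
    have heq : Wbar A E W (t + 1) = Wbar A E W t + (fun w => (A ^ t * E).mulVec w) '' W := by
      simp [Wbar, Finset.sum_range_succ]
    have hcont : Continuous fun w : Fin d → ℝ => (A ^ t * E).mulVec w :=
      (Matrix.mulVecLin (A ^ t * E)).continuous_of_finiteDimensional
    have hlin : Convex ℝ ((fun w : Fin d → ℝ => (A ^ t * E).mulVec w) '' W) :=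
      hWcvx.linear_image (Matrix.mulVecLin (A ^ t * E))
    rw [heq]
    exact ⟨hc.add (hWcpt.image hcont), hv.add hlin, hne.add (hWne.image _)⟩

/-- `C_{outer,ν}` is an RCIS of `x⁺ = Ax + Bu + Ew` within `Sxu`,
where `C̄_max` is the maximal CIS of the nominal system within `S̄xu`. -/
theorem stmt10 {n m d : ℕ} (A : Matrix (Fin n) (Fin n) ℝ) (B : Matrix (Fin n) (Fin m) ℝ)
    (E : Matrix (Fin n) (Fin d) ℝ) (W : Set (Fin d → ℝ))
    (Sxu : Set ((Fin n → ℝ) × (Fin m → ℝ))) (ν : ℕ) (hν : A ^ ν = 0)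
    (hWcpt : IsCompact W) (hWcvx : Convex ℝ W) (hWne : W.Nonempty)
    (Cmax : Set (Fin n → ℝ)) (hCcl : IsClosed Cmax) (hCcv : Convex ℝ Cmax)
    (hCIS : IsNomCIS A B E W ν Sxu Cmax)
    (hMax : ∀ C : Set (Fin n → ℝ), IsNomCIS A B E W ν Sxu C → C ⊆ Cmax) :
    IsRCIS A B E W Sxu (Couter A B E W ν Sxu Cmax) := by
  intro x hx
  obtain ⟨u, hSafe, hFinal⟩ := hx
  rcases ν with _ | N
  · -- ν = 0 : then `1 = 0` as a matrix, so `n = 0` and the state space is a singleton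
    have h1 : (1 : Matrix (Fin n) (Fin n) ℝ) = 0 := by simpa using hν
    have hss : ∀ a b : Fin n → ℝ, a = b := by
      rcases Nat.eq_zero_or_pos n with h0 | h0
      · subst h0; intro a b; funext i; exact i.elim0
      · exfalso
        have h2 : (1 : Matrix (Fin n) (Fin n) ℝ) ⟨0, h0⟩ ⟨0, h0⟩ = 0 := by rw [h1]; rfl
        simp [Matrix.one_apply_eq] at h2
    have hxC : x ∈ Cmax := by
      have hmem : x ∈ Reach A B E W x u 0 := by
        simp [Reach, Wbar]
      have := hFinal hmem
      simpa [Wbar] using this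
    obtain ⟨u0, hu0S, hu0C⟩ := hCIS x hxC
    refine ⟨u0, ?_, fun w hw => ?_⟩
    · have := hu0S 0 (by simp [Wbar]); simpa using this
    · refine ⟨fun _ => u0, fun t ht => absurd ht (Nat.not_lt_zero t), fun y hy => ?_⟩
      have hy' : y = A.mulVec x + B.mulVec u0 := hss _ _
      have hyC : y ∈ Cmax := hy' ▸ hu0C
      simpa [Wbar] using hyC
  · -- ν = N + 1
    have hstep0 : (x, u 0) ∈ Sxu := hSafe 0 (Nat.succ_pos N) x (by simp [Reach, Wbar])
    refine ⟨u 0, hstep0, fun w hw => ?_⟩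
    obtain ⟨hKc, hKv, ⟨k0, hk0⟩⟩ := wbar_props A E hWcpt hWcvx hWne (N + 1)
    set c : Fin n → ℝ := ∑ i ∈ Finset.range (N + 1), (A ^ i * B).mulVec (u (N - i)) with hc
    have hReachN : Reach A B E W x u (N + 1) = {c} + Wbar A E W (N + 1) := by
      unfold Reach
      rw [hν, Matrix.zero_mulVec, zero_add]
      simp only [Nat.add_sub_cancel]
      rfl
    have hcC : c ∈ Cmax := by
      apply radstrom_cancel hCcl hCcv hKc k0 hk0
      intro k hk
      have hmem : c + k ∈ Reach A B E W x u (N + 1) := by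
        rw [hReachN]; exact Set.add_mem_add rfl hk
      obtain ⟨p, hp, q, hq, hpq⟩ := Set.mem_add.mp (hFinal hmem)
      exact ⟨p, hp, q, hq, hpq.symm⟩
    obtain ⟨uc, hucS, hucC⟩ := hCIS c hcC
    set u' : ℕ → Fin m → ℝ := fun t => if t = N then uc else u (t + 1) with hu'
    have hshift : ∀ t ≤ N, ∀ y ∈ Reach A B E W (A.mulVec x + B.mulVec (u 0) + E.mulVec w) u' t,
        y ∈ Reach A B E W x u (t + 1) := by
      intro t ht y hy
      obtain ⟨a, ha, q, hq, rfl⟩ := Set.mem_add.mp hy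
      rw [Set.mem_singleton_iff] at ha
      subst ha
      have hsum : ∑ i ∈ Finset.range t, (A ^ i * B).mulVec (u' (t - 1 - i))
          = ∑ i ∈ Finset.range t, (A ^ i * B).mulVec (u (t - i)) := by
        refine Finset.sum_congr rfl fun i hi => ?_
        have hi' : i < t := Finset.mem_range.mp hi
        have h1 : t - 1 - i ≠ N := by omega
        have h2 : t - 1 - i + 1 = t - i := by omega
        simp only [hu']
        rw [if_neg h1, h2]
      have hWsucc : q + (A ^ t * E).mulVec w ∈ Wbar A E W (t + 1) := by
        have hW1 : Wbar A E W (t + 1)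
            = Wbar A E W t + (fun v => (A ^ t * E).mulVec v) '' W :=
          Finset.sum_range_succ _ _
        rw [hW1]
        exact Set.add_mem_add hq ⟨w, hw, rfl⟩
      have key : ((A ^ (t + 1)).mulVec x
              + ∑ i ∈ Finset.range (t + 1), (A ^ i * B).mulVec (u (t - i)))
            + (q + (A ^ t * E).mulVec w)
          = ((A ^ t).mulVec (A.mulVec x + B.mulVec (u 0) + E.mulVec w)
              + ∑ i ∈ Finset.range t, (A ^ i * B).mulVec (u' (t - 1 - i))) + q := by
        simp only [Matrix.mulVec_add, Matrix.mulVec_mulVec]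
        rw [← pow_succ, hsum, Finset.sum_range_succ, Nat.sub_self]
        abel
      show _ ∈ Reach A B E W x u (t + 1)
      unfold Reach
      simp only [Nat.add_sub_cancel]
      exact Set.mem_add.mpr ⟨_, Set.mem_singleton _, _, hWsucc, key⟩
    refine ⟨u', fun t ht y hy => ?_, fun y hy => ?_⟩
    · by_cases htN : t = N
      · subst htN
        have hy' := hshift _ le_rfl y hy
        rw [hReachN] at hy'
        obtain ⟨a, ha, q, hq, rfl⟩ := Set.mem_add.mp hy'
        rw [Set.mem_singleton_iff] at ha
        subst ha
        have huN : u' t = uc := by simp [hu']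
        rw [huN]
        exact hucS q hq
      · have ht' : t ≤ N := by omega
        have hres := hSafe (t + 1) (by omega) y (hshift t ht' y hy)
        have hut : u' t = u (t + 1) := by simp [hu', htN]
        rw [hut]
        exact hres
    · -- final horizon condition
      unfold Reach at hy
      obtain ⟨a, ha, q, hq, rfl⟩ := Set.mem_add.mp hy
      rw [Set.mem_singleton_iff] at ha
      subst ha
      have hAc : A.mulVec c = ∑ i ∈ Finset.range N, (A ^ (i + 1) * B).mulVec (u (N - i)) := by
        rw [hc]
        rw [show A.mulVec (∑ i ∈ Finset.range (N + 1), (A ^ i * B).mulVec (u (N - i)))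
            = ∑ i ∈ Finset.range (N + 1), A.mulVec ((A ^ i * B).mulVec (u (N - i))) from
          map_sum (Matrix.mulVecLin A) _ _]
        rw [Finset.sum_range_succ]
        have hlast : A.mulVec ((A ^ N * B).mulVec (u (N - N))) = 0 := by
          rw [Matrix.mulVec_mulVec, ← Matrix.mul_assoc, ← pow_succ', hν, Matrix.zero_mul,
            Matrix.zero_mulVec]
        rw [hlast, add_zero]
        refine Finset.sum_congr rfl fun i _ => ?_
        rw [Matrix.mulVec_mulVec, ← Matrix.mul_assoc, ← pow_succ']
      have hc' : (A ^ (N + 1)).mulVec (A.mulVec x + B.mulVec (u 0) + E.mulVec w)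
            + ∑ i ∈ Finset.range (N + 1), (A ^ i * B).mulVec (u' (N + 1 - 1 - i))
          = A.mulVec c + B.mulVec uc := by
        rw [hν, Matrix.zero_mulVec, zero_add]
        simp only [Nat.add_sub_cancel]
        rw [Finset.sum_range_succ']
        have h0 : (A ^ 0 * B).mulVec (u' (N - 0)) = B.mulVec uc := by
          simp [hu']
        rw [h0]
        have hterm : ∀ i ∈ Finset.range N, (A ^ (i + 1) * B).mulVec (u' (N - (i + 1)))
            = (A ^ (i + 1) * B).mulVec (u (N - i)) := by
          intro i hi
          have hi' : i < N := Finset.mem_range.mp hi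
          have h1 : N - (i + 1) ≠ N := by omega
          have h2 : N - (i + 1) + 1 = N - i := by omega
          simp only [hu']
          rw [if_neg h1, h2]
        rw [Finset.sum_congr rfl hterm, hAc]
      rw [hc']
      exact Set.add_mem_add hucC hq
end

section
/- For any choice of matrices P and H, if C_xv is a robust positively invariant set of the companion system (x,v) ↦ (Ax + BHv + Ew, Pv) within the companion safe set S_xv, then its projection onto the first n coordinates is contained in C_{outer,ν}. -/
open Pointwise

lemma mulVec_sum_aux {n k : ℕ} (A : Matrix (Fin n) (Fin n) ℝ) (M : Matrix (Fin n) (Fin k) ℝ)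
    (s : Finset ℕ) (f : ℕ → Fin k → ℝ) :
    A.mulVec (∑ i ∈ s, (A ^ i * M).mulVec (f i)) = ∑ i ∈ s, (A ^ (i + 1) * M).mulVec (f i) := by
  rw [show A.mulVec = A.mulVecLin from rfl, map_sum]
  refine Finset.sum_congr rfl fun i _ => ?_
  rw [Matrix.mulVecLin_apply, Matrix.mulVec_mulVec, ← Matrix.mul_assoc, ← pow_succ']

lemma mem_wbar_iff {n d : ℕ} (A : Matrix (Fin n) (Fin n) ℝ) (E : Matrix (Fin n) (Fin d) ℝ)
    (W : Set (Fin d → ℝ)) (hW : W.Nonempty) (t : ℕ) (qq : Fin n → ℝ) :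
    qq ∈ Wbar A E W t ↔ ∃ g : ℕ → Fin d → ℝ, (∀ i, g i ∈ W) ∧
      qq = ∑ i ∈ Finset.range t, (A ^ i * E).mulVec (g i) := by
  obtain ⟨w0, hw0⟩ := hW
  induction t generalizing qq with
  | zero =>
    simp only [Wbar, Finset.sum_range_zero, Set.mem_zero]
    constructor
    · rintro rfl; exact ⟨fun _ => w0, fun _ => hw0, rfl⟩
    · rintro ⟨g, hg, rfl⟩; rfl
  | succ t ih =>
    constructor
    · intro hqq
      rw [Wbar, Finset.sum_range_succ] at hqq
      obtain ⟨a, ha, b, hb, rfl⟩ := Set.mem_add.mp hqq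
      obtain ⟨g, hg, rfl⟩ := (ih a).mp ha
      obtain ⟨w, hw, rfl⟩ := hb
      refine ⟨fun i => if i = t then w else g i,
        fun i => by dsimp only; split <;> [exact hw; exact hg i], ?_⟩
      rw [Finset.sum_range_succ]
      congr 1
      · refine Finset.sum_congr rfl fun i hi => ?_
        simp [(Finset.mem_range.mp hi).ne]
      · simp
    · rintro ⟨g, hg, rfl⟩
      rw [Wbar, Finset.sum_range_succ, Finset.sum_range_succ]
      exact Set.add_mem_add ((ih _).mpr ⟨g, hg, rfl⟩) ⟨g t, hg t, rfl⟩

/-- For any matrices `P`, `H`, if `Cxv` is a robust positively invariant set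
of the companion system within the companion safe set, then `π₁(Cxv) ⊆ C_{outer,ν}`. -/
theorem stmt11 {n m d q : ℕ} (A : Matrix (Fin n) (Fin n) ℝ) (B : Matrix (Fin n) (Fin m) ℝ)
    (E : Matrix (Fin n) (Fin d) ℝ) (W : Set (Fin d → ℝ))
    (Sxu : Set ((Fin n → ℝ) × (Fin m → ℝ))) (ν : ℕ) (hν : A ^ ν = 0)
    (hWcpt : IsCompact W) (hWne : W.Nonempty)
    (Cmax : Set (Fin n → ℝ)) (hCcl : IsClosed Cmax) (hCcv : Convex ℝ Cmax)
    (hCIS : IsNomCIS A B E W ν Sxu Cmax)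
    (hMax : ∀ C : Set (Fin n → ℝ), IsNomCIS A B E W ν Sxu C → C ⊆ Cmax)
    (H : Matrix (Fin m) (Fin q) ℝ) (P : Matrix (Fin q) (Fin q) ℝ)
    (Cxv : Set ((Fin n → ℝ) × (Fin q → ℝ)))
    (hsub : Cxv ⊆ {p | (p.1, H.mulVec p.2) ∈ Sxu})
    (hinv : ∀ p ∈ Cxv, ∀ w ∈ W,
      (A.mulVec p.1 + B.mulVec (H.mulVec p.2) + E.mulVec w, P.mulVec p.2) ∈ Cxv) :
    Prod.fst '' Cxv ⊆ Couter A B E W ν Sxu Cmax := by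
  obtain ⟨w0, hw0⟩ := hWne
  rintro x ⟨⟨x, v⟩, hxv, rfl⟩
  -- trajectory lemma with explicit disturbance sequence
  have traj : ∀ (g : ℕ → Fin d → ℝ), (∀ i, g i ∈ W) → ∀ t,
      ((A ^ t).mulVec x
        + (∑ i ∈ Finset.range t, (A ^ i * B).mulVec (H.mulVec ((P ^ (t - 1 - i)).mulVec v)))
        + ∑ i ∈ Finset.range t, (A ^ i * E).mulVec (g (t - 1 - i)),
        (P ^ t).mulVec v) ∈ Cxv := by
    intro g hg t
    induction t with
    | zero => simpa [Matrix.one_mulVec] using hxv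
    | succ t ih =>
      have h := hinv _ ih (g t) (hg t)
      have e2 : P.mulVec ((P ^ t).mulVec v) = (P ^ (t + 1)).mulVec v := by
        rw [Matrix.mulVec_mulVec, ← pow_succ']
      have hsB : ∑ i ∈ Finset.range (t + 1),
            (A ^ i * B).mulVec (H.mulVec ((P ^ (t + 1 - 1 - i)).mulVec v))
          = (∑ i ∈ Finset.range t, (A ^ (i + 1) * B).mulVec (H.mulVec ((P ^ (t - 1 - i)).mulVec v)))
            + B.mulVec (H.mulVec ((P ^ t).mulVec v)) := by
        rw [Finset.sum_range_succ'
          (fun i => (A ^ i * B).mulVec (H.mulVec ((P ^ (t + 1 - 1 - i)).mulVec v))) t]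
        congr 1
        · refine Finset.sum_congr rfl fun i hi => ?_
          simp only [show t + 1 - 1 - (i + 1) = t - 1 - i from by omega]
        · simp [Matrix.one_mul]
      have hsE : ∑ i ∈ Finset.range (t + 1), (A ^ i * E).mulVec (g (t + 1 - 1 - i))
          = (∑ i ∈ Finset.range t, (A ^ (i + 1) * E).mulVec (g (t - 1 - i)))
            + E.mulVec (g t) := by
        rw [Finset.sum_range_succ' (fun i => (A ^ i * E).mulVec (g (t + 1 - 1 - i))) t]
        congr 1
        · refine Finset.sum_congr rfl fun i hi => ?_
          simp only [show t + 1 - 1 - (i + 1) = t - 1 - i from by omega]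
        · simp [Matrix.one_mul]
      have e1 : A.mulVec ((A ^ t).mulVec x
            + (∑ i ∈ Finset.range t, (A ^ i * B).mulVec (H.mulVec ((P ^ (t - 1 - i)).mulVec v)))
            + ∑ i ∈ Finset.range t, (A ^ i * E).mulVec (g (t - 1 - i)))
            + B.mulVec (H.mulVec ((P ^ t).mulVec v)) + E.mulVec (g t)
          = (A ^ (t + 1)).mulVec x
            + (∑ i ∈ Finset.range (t + 1),
                (A ^ i * B).mulVec (H.mulVec ((P ^ (t + 1 - 1 - i)).mulVec v)))
            + ∑ i ∈ Finset.range (t + 1), (A ^ i * E).mulVec (g (t + 1 - 1 - i)) := by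
        rw [hsB, hsE, Matrix.mulVec_add, Matrix.mulVec_add,
          mulVec_sum_aux A B _ (fun i => H.mulVec ((P ^ (t - 1 - i)).mulVec v)),
          mulVec_sum_aux A E _ (fun i => g (t - 1 - i)),
          Matrix.mulVec_mulVec, ← pow_succ']
        abel
      rw [e2, e1] at h
      exact h
  -- trajectory lemma with disturbance set
  have trajW : ∀ t, ∀ qq ∈ Wbar A E W t,
      ((A ^ t).mulVec x
        + (∑ i ∈ Finset.range t, (A ^ i * B).mulVec (H.mulVec ((P ^ (t - 1 - i)).mulVec v)))
        + qq, (P ^ t).mulVec v) ∈ Cxv := by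
    intro t qq hqq
    obtain ⟨g, hg, rfl⟩ := (mem_wbar_iff A E W ⟨w0, hw0⟩ t qq).mp hqq
    have hg'W : ∀ i, (fun j => if j < t then g (t - 1 - j) else w0) i ∈ W := fun i => by
      dsimp only; split <;> [exact hg _; exact hw0]
    have h := traj _ hg'W t
    have hgs : ∑ i ∈ Finset.range t,
          (A ^ i * E).mulVec ((fun j => if j < t then g (t - 1 - j) else w0) (t - 1 - i))
        = ∑ i ∈ Finset.range t, (A ^ i * E).mulVec (g i) := by
      refine Finset.sum_congr rfl fun i hi => ?_
      have hi' := Finset.mem_range.mp hi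
      have h1 : t - 1 - i < t := by omega
      simp only [h1, if_pos, show t - 1 - (t - 1 - i) = i from by omega]
    rw [hgs] at h
    exact h
  refine ⟨fun t => H.mulVec ((P ^ t).mulVec v), ?_, ?_⟩
  · intro t ht y hy
    simp only [Reach, Set.mem_add, Set.mem_singleton_iff] at hy
    obtain ⟨a, rfl, qq, hqq, rfl⟩ := hy
    exact hsub (trajW t qq hqq)
  · intro y hy
    simp only [Reach, Set.mem_add, Set.mem_singleton_iff] at hy
    obtain ⟨a, rfl, qq, hqq, rfl⟩ := hy
    rcases Nat.eq_zero_or_pos ν with rfl | hpos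
    · -- ν = 0, hence n = 0 and everything is trivial
      have hn : n = 0 := by
        by_contra hn
        have h1 := congrFun (congrFun hν ⟨0, Nat.pos_of_ne_zero hn⟩) ⟨0, Nat.pos_of_ne_zero hn⟩
        simp [Matrix.one_apply] at h1
      subst hn
      have hss : ∀ a b : Fin 0 → ℝ, a = b := fun a b => funext fun i => i.elim0
      have hx : x ∈ Cmax := by
        refine hMax (Prod.fst '' Cxv) ?_ ⟨(x, v), hxv, rfl⟩
        rintro z ⟨⟨z1, v1⟩, hz, rfl⟩
        refine ⟨H.mulVec v1, fun qq' hqq' => ?_, ?_⟩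
        · exact Set.mem_of_eq_of_mem (by rw [hss ((z1, v1).1 + qq') z1]) (hsub hz)
        · exact ⟨_, hinv _ hz w0 hw0, hss _ _⟩
      have h0 : (0 : Fin 0 → ℝ) ∈ Wbar A E W 0 := by
        simp only [Wbar, Finset.sum_range_zero]
        exact Set.zero_mem_zero
      exact Set.mem_of_eq_of_mem (hss _ _) (Set.add_mem_add hx h0)
    · obtain ⟨k, rfl⟩ := Nat.exists_eq_succ_of_ne_zero hpos.ne'
      -- the candidate nominal CIS
      have hC' : IsNomCIS A B E W (k + 1) Sxu
          { z : Fin n → ℝ | ∃ v' : Fin q → ℝ,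
            z = ∑ i ∈ Finset.range (k + 1),
              (A ^ i * B).mulVec (H.mulVec ((P ^ (k - i)).mulVec v')) ∧
            ∀ qq ∈ Wbar A E W (k + 1), (z + qq, (P ^ (k + 1)).mulVec v') ∈ Cxv } := by
        rintro z ⟨v', hz, hsafe⟩
        refine ⟨H.mulVec ((P ^ (k + 1)).mulVec v'), fun qq' hqq' => hsub (hsafe qq' hqq'), ?_⟩
        refine ⟨P.mulVec v', ?_, ?_⟩
        · -- algebraic formula for the successor
          have hz1 : (A ^ (k + 1) * B) = 0 := by rw [hν, Matrix.zero_mul]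
          have hsR : ∑ i ∈ Finset.range (k + 1),
                (A ^ i * B).mulVec (H.mulVec ((P ^ (k - i)).mulVec (P.mulVec v')))
              = (∑ i ∈ Finset.range k,
                  (A ^ (i + 1) * B).mulVec (H.mulVec ((P ^ (k - i)).mulVec v')))
                + B.mulVec (H.mulVec ((P ^ (k + 1)).mulVec v')) := by
            rw [Finset.sum_range_succ'
              (fun i => (A ^ i * B).mulVec (H.mulVec ((P ^ (k - i)).mulVec (P.mulVec v')))) k]
            congr 1
            · refine Finset.sum_congr rfl fun i hi => ?_
              have hik := Finset.mem_range.mp hi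
              simp only [Matrix.mulVec_mulVec (v := v') (M := P ^ (k - (i + 1))) (N := P),
                ← pow_succ, show k - (i + 1) + 1 = k - i from by omega]
            · simp only [pow_zero, Matrix.one_mul, Nat.sub_zero,
                Matrix.mulVec_mulVec (v := v') (M := P ^ k) (N := P), ← pow_succ]
          rw [hz, hsR, mulVec_sum_aux A B _ (fun i => H.mulVec ((P ^ (k - i)).mulVec v')),
            Finset.sum_range_succ (fun i => (A ^ (i + 1) * B).mulVec
              (H.mulVec ((P ^ (k - i)).mulVec v'))) k]
          simp only [hz1, Matrix.zero_mulVec, add_zero]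
        · -- invariance of the successor
          intro qq' hqq'
          obtain ⟨g, hg, rfl⟩ := (mem_wbar_iff A E W ⟨w0, hw0⟩ (k + 1) qq').mp hqq'
          have hqq2 : (∑ i ∈ Finset.range (k + 1), (A ^ i * E).mulVec (g (i + 1)))
              ∈ Wbar A E W (k + 1) :=
            (mem_wbar_iff A E W ⟨w0, hw0⟩ (k + 1) _).mpr ⟨fun i => g (i + 1), fun i => hg _, rfl⟩
          have h2 := hinv _ (hsafe _ hqq2) (g 0) (hg 0)
          have e2 : P.mulVec ((P ^ (k + 1)).mulVec v') = (P ^ (k + 1)).mulVec (P.mulVec v') := by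
            rw [Matrix.mulVec_mulVec, Matrix.mulVec_mulVec, ← pow_succ, ← pow_succ']
          have hzE : (A ^ (k + 1) * E) = 0 := by rw [hν, Matrix.zero_mul]
          have e3 : A.mulVec (z + ∑ i ∈ Finset.range (k + 1), (A ^ i * E).mulVec (g (i + 1)))
                + B.mulVec (H.mulVec ((P ^ (k + 1)).mulVec v')) + E.mulVec (g 0)
              = A.mulVec z + B.mulVec (H.mulVec ((P ^ (k + 1)).mulVec v'))
                + ∑ i ∈ Finset.range (k + 1), (A ^ i * E).mulVec (g i) := by
            rw [Matrix.mulVec_add, mulVec_sum_aux A E _ (fun i => g (i + 1)),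
              Finset.sum_range_succ' (fun i => (A ^ i * E).mulVec (g i)) k,
              Finset.sum_range_succ (fun i => (A ^ (i + 1) * E).mulVec (g (i + 1))) k]
            simp only [hzE, Matrix.zero_mulVec, add_zero, pow_zero, Matrix.one_mul]
            abel
          rw [e2, e3] at h2
          exact h2
      -- the nominal endpoint lies in Cmax
      have hSN : (∑ i ∈ Finset.range (k + 1),
          (A ^ i * B).mulVec (H.mulVec ((P ^ (k - i)).mulVec v))) ∈ Cmax := by
        refine hMax _ hC' ⟨v, rfl, ?_⟩
        intro qq' hqq'
        have h3 := trajW (k + 1) qq' hqq'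
        rw [hν, Matrix.zero_mulVec, zero_add] at h3
        have e4 : ∑ i ∈ Finset.range (k + 1),
              (A ^ i * B).mulVec (H.mulVec ((P ^ (k + 1 - 1 - i)).mulVec v))
            = ∑ i ∈ Finset.range (k + 1),
              (A ^ i * B).mulVec (H.mulVec ((P ^ (k - i)).mulVec v)) := by
          simp only [Nat.add_sub_cancel]
        rw [e4] at h3
        exact h3
      have e5 : (A ^ (k + 1)).mulVec x
            + ∑ i ∈ Finset.range (k + 1),
              (A ^ i * B).mulVec (H.mulVec ((P ^ (k + 1 - 1 - i)).mulVec v))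
          = ∑ i ∈ Finset.range (k + 1),
              (A ^ i * B).mulVec (H.mulVec ((P ^ (k - i)).mulVec v)) := by
        rw [hν, Matrix.zero_mulVec, zero_add]
        simp only [Nat.add_sub_cancel]
      exact Set.mem_of_eq_of_mem (by rw [e5]) (Set.add_mem_add hSN hqq)
end

section
/- If there exists a point x and input u with (x + W̄_∞) × {u} ⊆ S_xu and Ax + Bu = x (a fixed point of the nominal dynamics within the shrunk safe set), then the set x + W̄_∞ is a robust controlled invariant set of x⁺ = Ax + Bu + Ew within S_xu. -/
open Pointwise

lemma key {n d : ℕ} (A : Matrix (Fin n) (Fin n) ℝ) (E : Matrix (Fin n) (Fin d) ℝ)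
    (W : Set (Fin d → ℝ)) (ν : ℕ) (hν : A ^ ν = 0) (v : Fin n → ℝ) (hv : v ∈ Wbar A E W ν)
    (w : Fin d → ℝ) (hw : w ∈ W) : A.mulVec v + E.mulVec w ∈ Wbar A E W ν := by
  rcases ν with _ | k
  · -- A^0 = 0 means 1 = 0, everything collapses
    have h1 : (1 : Matrix (Fin n) (Fin n) ℝ) = 0 := by simpa using hν
    have hA : A = 0 := by calc A = A * 1 := by rw [mul_one]
                              _ = 0 := by rw [h1, mul_zero]
    have hE : E = 0 := by
      calc E = (1 : Matrix (Fin n) (Fin n) ℝ) * E := by rw [Matrix.one_mul]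
        _ = 0 := by rw [h1, Matrix.zero_mul]
    simp only [Wbar, Finset.range_zero, Finset.sum_empty] at hv ⊢
    simp only [Set.mem_zero] at hv ⊢
    simp [hA, hE, Matrix.zero_mulVec]
  · rw [Wbar, Set.mem_finset_sum] at hv
    obtain ⟨g, hg, hsum⟩ := hv
    -- g i = (A^i * E).mulVec (h i)
    rw [Wbar, Set.mem_finset_sum]
    refine ⟨fun i => if i = 0 then E.mulVec w else A.mulVec (g (i - 1)), ?_, ?_⟩
    · intro i hi
      rcases i with _ | j
      · simpa using ⟨w, hw, by simp⟩
      · simp only [Nat.succ_ne_zero, if_false, Nat.succ_sub_one]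
        have hj : j ∈ Finset.range (k + 1) := by
          simp only [Finset.mem_range] at hi ⊢; omega
        obtain ⟨h, hhW, hh⟩ := hg hj
        exact ⟨h, hhW, by rw [← hh]; simp [Matrix.mulVec_mulVec, pow_succ, mul_assoc,
          ← Matrix.mul_assoc, ← pow_succ']⟩
    · rw [Finset.sum_range_succ'] 
      simp only [Nat.succ_ne_zero, if_false, Nat.succ_sub_one, if_true, ite_true, ite_false]
      rw [Finset.sum_range_succ] at hsum
      have hgk : A.mulVec (g k) = 0 := by
        obtain ⟨h, hhW, hh⟩ := hg (Finset.self_mem_range_succ k)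
        rw [← hh, Matrix.mulVec_mulVec, ← Matrix.mul_assoc, ← pow_succ', hν, Matrix.zero_mul,
          Matrix.zero_mulVec]
      have : A.mulVec v = ∑ i ∈ Finset.range k, A.mulVec (g i) := by
        rw [← hsum, Matrix.mulVec_add, hgk, add_zero]
        rw [show ∀ z, A.mulVec z = A.mulVecLin z from fun _ => rfl, map_sum]
        simp only [Matrix.mulVecLin_apply]
      rw [this, add_comm]

/-- If `(x + W̄_∞) × {u} ⊆ Sxu` and `Ax + Bu = x`, then `x + W̄_∞` is an
RCIS of `x⁺ = Ax + Bu + Ew` within `Sxu`. -/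
theorem stmt12 {n m d : ℕ} (A : Matrix (Fin n) (Fin n) ℝ) (B : Matrix (Fin n) (Fin m) ℝ)
    (E : Matrix (Fin n) (Fin d) ℝ) (W : Set (Fin d → ℝ))
    (Sxu : Set ((Fin n → ℝ) × (Fin m → ℝ))) (ν : ℕ) (hν : A ^ ν = 0)
    (x : Fin n → ℝ) (u : Fin m → ℝ)
    (hsafe : ∀ y ∈ {x} + Wbar A E W ν, (y, u) ∈ Sxu)
    (hfix : A.mulVec x + B.mulVec u = x) :
    IsRCIS A B E W Sxu ({x} + Wbar A E W ν) := by
  intro y hy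
  refine ⟨u, hsafe y hy, fun w hw => ?_⟩
  obtain ⟨a, ha, v, hv, rfl⟩ := hy
  rw [Set.mem_singleton_iff] at ha; subst ha
  refine ⟨a, rfl, A.mulVec v + E.mulVec w, key A E W ν hν v hv w hw, ?_⟩
  conv_lhs => rw [← hfix]
  rw [Matrix.mulVec_add]; abel
end
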